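/- arXiv:1501.06299 — 5 statements merged into one kernel-verified Lean document; each statement's English description precedes it below -/
import Mathlib

section
/- For integers m ≤ y ≤ b-1 (with a < m < b, n > 0), the cumulative distribution function of DTSP(a,m,b,n) satisfies F(y) = 1 - ((b-m)/(b-a)) · ((b-y-1)/(b-m))^n. -/
/-! Each branch of the pmf is a difference of consecutive `n`-th powers, so every partial sum
telescopes to its boundary terms; the left branch contributes its full mass `(m - a)/(b - a)`. -/

open Finset

/-- The pmf of the discrete two-sided power distribution DTSP(a, m, b, n). -/
noncomputable def dtspPmf (a m b : ℤ) (n : ℝ) (y : ℤ) : ℝ :=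
  if y < m then
    (((y - a + 1 : ℤ) : ℝ) ^ n - ((y - a : ℤ) : ℝ) ^ n) /
      (((b - a : ℤ) : ℝ) * ((m - a : ℤ) : ℝ) ^ (n - 1))
  else
    (((b - y : ℤ) : ℝ) ^ n - ((b - y - 1 : ℤ) : ℝ) ^ n) /
      (((b - a : ℤ) : ℝ) * ((b - m : ℤ) : ℝ) ^ (n - 1))

theorem Int.sum_Ico_sub {M : Type*} [AddCommGroup M] (f : ℤ → M) {a c : ℤ} (hac : a ≤ c) :
    ∑ t ∈ Ico a c, (f (t + 1) - f t) = f c - f a := by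
  induction c, hac using Int.leInduction with
  | base => simp
  | succ c hac ih =>
    rw [← insert_Ico_right_eq_Ico_add_one hac, sum_insert right_notMem_Ico, ih]
    abel

theorem Real.rpow_div_mul_rpow_sub_one {x : ℝ} (hx : 0 < x) (c n : ℝ) :
    x ^ n / (c * x ^ (n - 1)) = x / c := by
  have := (Real.rpow_pos_of_pos hx n).ne'
  rw [Real.rpow_sub_one hx.ne']
  field_simp

theorem dtspPmf_sum_left (a m b : ℤ) {n : ℝ} (ham : a < m) (hn : n ≠ 0) :
    ∑ t ∈ Ico a m, dtspPmf a m b n t = ((m - a : ℤ) : ℝ) / ((b - a : ℤ) : ℝ) := by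
  have hpmf : ∀ t ∈ Ico a m, dtspPmf a m b n t =
      ((((t + 1 - a : ℤ) : ℝ) ^ n - ((t - a : ℤ) : ℝ) ^ n)) /
        (((b - a : ℤ) : ℝ) * ((m - a : ℤ) : ℝ) ^ (n - 1)) := by
    intro t ht
    rw [dtspPmf, if_pos (mem_Ico.1 ht).2, sub_add_eq_add_sub]
  have hma : (0 : ℝ) < ((m - a : ℤ) : ℝ) := by exact_mod_cast sub_pos.2 ham
  rw [sum_congr rfl hpmf, ← sum_div,
    Int.sum_Ico_sub (fun t => ((t - a : ℤ) : ℝ) ^ n) ham.le, sub_self, Int.cast_zero,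
    Real.zero_rpow hn, sub_zero, Real.rpow_div_mul_rpow_sub_one hma]

theorem dtspPmf_sum_right (a : ℤ) {m b c : ℤ} (n : ℝ) (hmc : m ≤ c) (hcb : c ≤ b) (hmb : m < b) :
    ∑ t ∈ Ico m c, dtspPmf a m b n t =
      ((b - m : ℤ) : ℝ) / ((b - a : ℤ) : ℝ) *
        (1 - (((b - c : ℤ) : ℝ) / ((b - m : ℤ) : ℝ)) ^ n) := by
  have hpmf : ∀ t ∈ Ico m c, dtspPmf a m b n t =
      -((((b - (t + 1) : ℤ) : ℝ) ^ n - ((b - t : ℤ) : ℝ) ^ n)) /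
        (((b - a : ℤ) : ℝ) * ((b - m : ℤ) : ℝ) ^ (n - 1)) := by
    intro t ht
    rw [dtspPmf, if_neg (mem_Ico.1 ht).1.not_gt, neg_sub, sub_sub]
  have hbm : (0 : ℝ) < ((b - m : ℤ) : ℝ) := by exact_mod_cast sub_pos.2 hmb
  have hbc : (0 : ℝ) ≤ ((b - c : ℤ) : ℝ) := by exact_mod_cast sub_nonneg.2 hcb
  rw [sum_congr rfl hpmf, ← sum_div, sum_neg_distrib,
    Int.sum_Ico_sub (fun t => ((b - t : ℤ) : ℝ) ^ n) hmc, neg_sub, sub_div,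
    Real.rpow_div_mul_rpow_sub_one hbm, Real.div_rpow hbc hbm.le, Real.rpow_sub_one hbm.ne']
  have := (Real.rpow_pos_of_pos hbm n).ne'
  field_simp

/-- CDF of DTSP on the right branch. -/
theorem dtsp_cdf_right (a m b : ℤ) (n : ℝ)
    (ham : a < m) (hmb : m < b) (hn : 0 < n)
    (y : ℤ) (hmy : m ≤ y) (hyb : y ≤ b - 1) :
    ∑ t ∈ Finset.Icc a y, dtspPmf a m b n t =
      1 - (((b - m : ℤ) : ℝ) / ((b - a : ℤ) : ℝ)) *
        (((b - y - 1 : ℤ) : ℝ) / ((b - m : ℤ) : ℝ)) ^ n := by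
  have hba : ((b - a : ℤ) : ℝ) ≠ 0 := by exact_mod_cast (sub_pos.2 (ham.trans hmb)).ne'
  rw [← Ico_add_one_right_eq_Icc, ← Ico_union_Ico_eq_Ico ham.le (by omega),
    sum_union (Ico_disjoint_Ico_consecutive a m (y + 1)), dtspPmf_sum_left a m b ham hn.ne',
    dtspPmf_sum_right a n (by omega) (by omega) hmb, sub_sub]
  field_simp
  push_cast
  ring
end

section
/- The survival function of DTSP(a,m,b,n) evaluated at integer points agrees with the survival function of the continuous TSP(a,m,b,n) distribution: for each integer y with a ≤ y ≤ b-1, S_DTSP(y) = S_TSP(y). -/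
open Finset

/-- Survival function of the continuous TSP(a, m, b, n) distribution. -/
noncomputable def tspSurv (a m b : ℤ) (n : ℝ) (x : ℝ) : ℝ :=
  if x ≤ (m : ℝ) then
    1 - (((m : ℝ) - a) / ((b : ℝ) - a)) * ((x - a) / ((m : ℝ) - a)) ^ n
  else
    (((b : ℝ) - m) / ((b : ℝ) - a)) * (((b : ℝ) - x) / ((b : ℝ) - m)) ^ n

/-!
The DTSP pmf is exactly the mass that the continuous TSP(a, m, b, n) distribution puts on
`[t, t + 1)`, i.e. `p(t) = S(t) - S(t + 1)`, so the DTSP survival sum telescopes to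
`S(y) - S(b) = S(y)`.
-/

theorem Finset.sum_Ico_int_sub_add_one {M : Type*} [AddCommGroup M] (f : ℤ → M) {y c : ℤ}
    (h : y ≤ c) : ∑ t ∈ Ico y c, (f t - f (t + 1)) = f y - f c := by
  induction c, h using Int.leInduction with
  | base => simp
  | succ c hc ih =>
    rw [← insert_Ico_right_eq_Ico_add_one hc, sum_insert right_notMem_Ico, ih]
    abel

theorem div_mul_div_rpow_sub_div_rpow {c u v : ℝ} (d n : ℝ) (hc : 0 < c) (hu : 0 ≤ u)
    (hv : 0 ≤ v) :
    c / d * ((u / c) ^ n - (v / c) ^ n) = (u ^ n - v ^ n) / (d * c ^ (n - 1)) := by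
  rw [Real.div_rpow hu hc.le, Real.div_rpow hv hc.le, Real.rpow_sub hc, Real.rpow_one]
  have : c ^ n ≠ 0 := (Real.rpow_pos_of_pos hc n).ne'
  field_simp

section TSP

variable {a m b : ℤ} {n : ℝ}

theorem tspSurv_of_le (x : ℝ) (hx : x ≤ m) :
    tspSurv a m b n x = 1 - ((m : ℝ) - a) / ((b : ℝ) - a) * ((x - a) / ((m : ℝ) - a)) ^ n :=
  if_pos hx

theorem tspSurv_of_ge (ham : a < m) (hmb : m < b) (x : ℝ) (hx : (m : ℝ) ≤ x) :
    tspSurv a m b n x = ((b : ℝ) - m) / ((b : ℝ) - a) * (((b : ℝ) - x) / ((b : ℝ) - m)) ^ n := by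
  rcases hx.eq_or_lt with rfl | hmx
  · have ham' : (a : ℝ) < m := by exact_mod_cast ham
    have hmb' : (m : ℝ) < b := by exact_mod_cast hmb
    rw [tspSurv_of_le _ le_rfl, div_self (sub_pos.2 ham').ne', div_self (sub_pos.2 hmb').ne',
      Real.one_rpow, mul_one, mul_one]
    field_simp [(sub_pos.2 (ham'.trans hmb')).ne']
    ring
  · exact if_neg hmx.not_ge

theorem tspSurv_right_endpoint (hmb : m < b) (hn : n ≠ 0) : tspSurv a m b n b = 0 := by
  have hmb' : (m : ℝ) < b := by exact_mod_cast hmb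
  rw [tspSurv, if_neg hmb'.not_ge, sub_self, zero_div, Real.zero_rpow hn, mul_zero]

theorem dtspPmf_eq_tspSurv_sub (ham : a < m) (hmb : m < b) {t : ℤ} (hat : a ≤ t) (htb : t < b) :
    dtspPmf a m b n t = tspSurv a m b n t - tspSurv a m b n (t + 1) := by
  have hat' : (a : ℝ) ≤ t := by exact_mod_cast hat
  have htb' : (t : ℝ) + 1 ≤ b := by exact_mod_cast htb
  rw [dtspPmf]
  split_ifs with htm
  · have htm' : (t : ℝ) + 1 ≤ m := by exact_mod_cast htm
    have hma : (0 : ℝ) < m - a := sub_pos.2 (by exact_mod_cast ham)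
    rw [tspSurv_of_le _ (by linarith), tspSurv_of_le _ htm', sub_sub_sub_cancel_left, ← mul_sub,
      div_mul_div_rpow_sub_div_rpow _ _ hma (by linarith : (0 : ℝ) ≤ t + 1 - a)
        (by linarith : (0 : ℝ) ≤ t - a)]
    push_cast
    rw [sub_add_eq_add_sub]
  · have hmt : (m : ℝ) ≤ t := by exact_mod_cast not_lt.1 htm
    have hbm : (0 : ℝ) < b - m := sub_pos.2 (by exact_mod_cast hmb)
    rw [tspSurv_of_ge ham hmb _ hmt, tspSurv_of_ge ham hmb _ (by linarith), ← mul_sub,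
      div_mul_div_rpow_sub_div_rpow _ _ hbm (by linarith : (0 : ℝ) ≤ b - t)
        (by linarith : (0 : ℝ) ≤ b - (t + 1))]
    push_cast
    rw [sub_sub]

end TSP

/-- The DTSP survival function agrees with the TSP survival function at integer points. -/
theorem dtsp_survival_eq_tsp_survival (a m b : ℤ) (n : ℝ)
    (ham : a < m) (hmb : m < b) (hn : 0 < n)
    (y : ℤ) (hay : a ≤ y) (hyb : y ≤ b - 1) :
    ∑ t ∈ Finset.Icc y (b - 1), dtspPmf a m b n t = tspSurv a m b n (y : ℝ) := by
  have hpmf : ∀ t ∈ Ico y b,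
      dtspPmf a m b n t = tspSurv a m b n t - tspSurv a m b n ((t + 1 : ℤ) : ℝ) := by
    intro t ht
    rw [mem_Ico] at ht
    push_cast
    exact dtspPmf_eq_tspSurv_sub ham hmb (hay.trans ht.1) ht.2
  rw [Icc_sub_one_right_eq_Ico, sum_congr rfl hpmf,
    sum_Ico_int_sub_add_one (fun t : ℤ => tspSurv a m b n t) (by omega),
    tspSurv_right_endpoint hmb hn.ne', sub_zero]
end

section
/- Reflection symmetry of DTSP: for integers a < 0 with b = -a and a < m < -a, and n > 0, the pmf satisfies p_{DTSP(a,m,-a,n)}(y) = p_{DTSP(a,-m,-a,n)}(-y-1) for all a ≤ y ≤ -a-1. -/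
open Finset

/-- Reflection symmetry of the DTSP pmf when b = -a. -/
theorem dtsp_reflection (a m : ℤ) (n : ℝ)
    (ha : a < 0) (ham : a < m) (hma : m < -a) (hn : 0 < n)
    (y : ℤ) (hay : a ≤ y) (hy : y ≤ -a - 1) :
    dtspPmf a m (-a) n y = dtspPmf a (-m) (-a) n (-y - 1) := by
  unfold dtspPmf
  rcases lt_or_ge y m with h | h
  · rw [if_pos h, if_neg (by omega)]
    have h1 : (-a : ℤ) - (-y - 1) = y - a + 1 := by ring
    have h2 : (-a : ℤ) - (-y - 1) - 1 = y - a := by ring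
    have h3 : (-a : ℤ) - (-m) = m - a := by ring
    rw [h2, h1, h3]
  · rw [if_neg (by omega), if_pos (by omega)]
    have h1 : (-y - 1 : ℤ) - a + 1 = -a - y := by ring
    have h2 : (-y - 1 : ℤ) - a = -a - y - 1 := by ring
    have h3 : (-m : ℤ) - a = -a - m := by ring
    rw [h1, h2, h3]
end

section
/- For n > 1 and a ≤ y ≤ m-1, the DTSP(a,m,b,n) pmf is strictly increasing in y: p(y) < p(y+1) for a ≤ y ≤ m-2; and for m ≤ y ≤ b-2, p(y) > p(y+1), i.e., the mode is at m or m-1. -/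
open Finset

/-- Convexity step: for `0 ≤ x` and `1 < n`, `(x+1)^n - x^n < (x+2)^n - (x+1)^n`. -/
lemma rpow_diff_lt {n : ℝ} (hn : 1 < n) {x : ℝ} (hx : 0 ≤ x) :
    (x + 1) ^ n - x ^ n < (x + 2) ^ n - (x + 1) ^ n := by
  have hconv := strictConvexOn_rpow hn
  have hx2 : (0 : ℝ) ≤ x + 2 := by linarith
  have h := hconv.2 (Set.mem_Ici.2 hx) (Set.mem_Ici.2 hx2)
      (by intro h; linarith [h]) (by norm_num : (0:ℝ) < 1/2)
      (by norm_num : (0:ℝ) < 1/2) (by norm_num)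
  simp only [smul_eq_mul] at h
  have heq : (1/2 : ℝ) * x + (1/2 : ℝ) * (x + 2) = x + 1 := by ring
  rw [heq] at h
  linarith

/-- For n > 1 the DTSP pmf is strictly increasing up to m and strictly decreasing after. -/
theorem dtsp_unimodal (a m b : ℤ) (n : ℝ)
    (ham : a < m) (hmb : m < b) (hn : 1 < n) :
    (∀ y : ℤ, a ≤ y → y ≤ m - 2 → dtspPmf a m b n y < dtspPmf a m b n (y + 1)) ∧
    (∀ y : ℤ, m ≤ y → y ≤ b - 2 → dtspPmf a m b n (y + 1) < dtspPmf a m b n y) := by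
  have hba : (0:ℝ) < ((b - a : ℤ) : ℝ) := by exact_mod_cast (by omega : (0:ℤ) < b - a)
  constructor
  · intro y hay hym
    have h1 : y < m := by omega
    have h2 : y + 1 < m := by omega
    rw [dtspPmf, dtspPmf, if_pos h1, if_pos h2]
    have hden : (0:ℝ) < ((b - a : ℤ) : ℝ) * ((m - a : ℤ) : ℝ) ^ (n - 1) := by
      have : (0:ℝ) < ((m - a : ℤ) : ℝ) := by exact_mod_cast (by omega : (0:ℤ) < m - a)
      exact mul_pos hba (Real.rpow_pos_of_pos this _)
    apply div_lt_div_of_pos_right ?_ hden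
    have hx : (0:ℝ) ≤ ((y - a : ℤ) : ℝ) := by exact_mod_cast (by omega : (0:ℤ) ≤ y - a)
    have key := rpow_diff_lt hn hx
    have e1 : ((y - a + 1 : ℤ) : ℝ) = ((y - a : ℤ) : ℝ) + 1 := by push_cast; ring
    have e2 : ((y + 1 - a + 1 : ℤ) : ℝ) = ((y - a : ℤ) : ℝ) + 2 := by push_cast; ring
    have e3 : ((y + 1 - a : ℤ) : ℝ) = ((y - a : ℤ) : ℝ) + 1 := by push_cast; ring
    rw [e1, e2, e3]
    linarith
  · intro y hmy hyb
    have h1 : ¬ y < m := by omega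
    have h2 : ¬ y + 1 < m := by omega
    rw [dtspPmf, dtspPmf, if_neg h1, if_neg h2]
    have hden : (0:ℝ) < ((b - a : ℤ) : ℝ) * ((b - m : ℤ) : ℝ) ^ (n - 1) := by
      have : (0:ℝ) < ((b - m : ℤ) : ℝ) := by exact_mod_cast (by omega : (0:ℤ) < b - m)
      exact mul_pos hba (Real.rpow_pos_of_pos this _)
    apply div_lt_div_of_pos_right ?_ hden
    have hx : (0:ℝ) ≤ ((b - y - 2 : ℤ) : ℝ) := by exact_mod_cast (by omega : (0:ℤ) ≤ b - y - 2)
    have key := rpow_diff_lt hn hx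
    have e1 : ((b - (y + 1) : ℤ) : ℝ) = ((b - y - 2 : ℤ) : ℝ) + 1 := by push_cast; ring
    have e2 : ((b - (y + 1) - 1 : ℤ) : ℝ) = ((b - y - 2 : ℤ) : ℝ) := by push_cast; ring
    have e3 : ((b - y : ℤ) : ℝ) = ((b - y - 2 : ℤ) : ℝ) + 2 := by push_cast; ring
    have e4 : ((b - y - 1 : ℤ) : ℝ) = ((b - y - 2 : ℤ) : ℝ) + 1 := by push_cast; ring
    rw [e1, e2, e3, e4]
    linarith
end

section
/- For 0 < n < 1 and integers a < m < b, the DTSP(a,m,b,n) pmf values at the endpoints are p(a) = 1/((b-a)(m-a)^{n-1}) and p(b-1) = 1/((b-a)(b-m)^{n-1}), and the pmf is strictly decreasing on {a,...,m-1} and strictly increasing on {m,...,b-1} (U-shape). -/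
open Finset

lemma rpow_concave_step {n : ℝ} (hn0 : 0 < n) (hn1 : n < 1) {x : ℝ} (hx : 0 ≤ x) :
    x ^ n + (x + 2) ^ n < 2 * (x + 1) ^ n := by
  have h := (Real.strictConcaveOn_rpow hn0 hn1).2 (Set.mem_Ici.2 hx)
    (Set.mem_Ici.2 (by linarith : (0:ℝ) ≤ x + 2)) (ne_of_lt (by linarith))
    (by norm_num : (0:ℝ) < 1/2) (by norm_num : (0:ℝ) < 1/2) (by norm_num)
  simp only [smul_eq_mul] at h
  have hmid : (1/2 : ℝ) * x + 1/2 * (x + 2) = x + 1 := by ring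
  rw [hmid] at h
  linarith

/-- For 0 < n < 1 the DTSP pmf is U-shaped: endpoint values and monotonicity. -/
theorem dtsp_u_shape (a m b : ℤ) (n : ℝ)
    (ham : a < m) (hmb : m < b) (hn0 : 0 < n) (hn1 : n < 1) :
    dtspPmf a m b n a = 1 / (((b - a : ℤ) : ℝ) * ((m - a : ℤ) : ℝ) ^ (n - 1)) ∧
    dtspPmf a m b n (b - 1) = 1 / (((b - a : ℤ) : ℝ) * ((b - m : ℤ) : ℝ) ^ (n - 1)) ∧
    (∀ y : ℤ, a ≤ y → y ≤ m - 2 → dtspPmf a m b n (y + 1) < dtspPmf a m b n y) ∧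
    (∀ y : ℤ, m ≤ y → y ≤ b - 2 → dtspPmf a m b n y < dtspPmf a m b n (y + 1)) := by
  have hma : (0:ℝ) < ((m - a : ℤ) : ℝ) := by exact_mod_cast sub_pos.2 ham
  have hbm : (0:ℝ) < ((b - m : ℤ) : ℝ) := by exact_mod_cast sub_pos.2 hmb
  have hba : (0:ℝ) < ((b - a : ℤ) : ℝ) := by
    have : a < b := ham.trans hmb; exact_mod_cast sub_pos.2 this
  have hd1 : (0:ℝ) < ((b - a : ℤ) : ℝ) * ((m - a : ℤ) : ℝ) ^ (n - 1) :=
    mul_pos hba (Real.rpow_pos_of_pos hma _)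
  have hd2 : (0:ℝ) < ((b - a : ℤ) : ℝ) * ((b - m : ℤ) : ℝ) ^ (n - 1) :=
    mul_pos hba (Real.rpow_pos_of_pos hbm _)
  refine ⟨?_, ?_, ?_, ?_⟩
  · rw [dtspPmf, if_pos ham]
    have h1 : ((a - a + 1 : ℤ) : ℝ) = 1 := by push_cast; ring
    have h2 : ((a - a : ℤ) : ℝ) = 0 := by push_cast; ring
    rw [h1, h2, Real.one_rpow, Real.zero_rpow hn0.ne', sub_zero]
  · rw [dtspPmf, if_neg (by omega)]
    have h1 : ((b - (b-1) : ℤ) : ℝ) = 1 := by push_cast; ring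
    have h2 : ((b - (b-1) - 1 : ℤ) : ℝ) = 0 := by push_cast; ring
    rw [h1, h2, Real.one_rpow, Real.zero_rpow hn0.ne', sub_zero]
  · intro y hy1 hy2
    rw [dtspPmf, dtspPmf, if_pos (by omega), if_pos (by omega)]
    apply div_lt_div_of_pos_right _ hd1
    have hx : (0:ℝ) ≤ ((y - a : ℤ) : ℝ) := by exact_mod_cast sub_nonneg.2 hy1
    have h := rpow_concave_step hn0 hn1 hx
    have e1 : ((y + 1 - a + 1 : ℤ) : ℝ) = ((y - a : ℤ) : ℝ) + 2 := by push_cast; ring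
    have e2 : ((y + 1 - a : ℤ) : ℝ) = ((y - a : ℤ) : ℝ) + 1 := by push_cast; ring
    have e3 : ((y - a + 1 : ℤ) : ℝ) = ((y - a : ℤ) : ℝ) + 1 := by push_cast; ring
    rw [e1, e2, e3]
    linarith
  · intro y hy1 hy2
    rw [dtspPmf, dtspPmf, if_neg (by omega), if_neg (by omega)]
    apply div_lt_div_of_pos_right _ hd2
    have hx : (0:ℝ) ≤ ((b - y - 2 : ℤ) : ℝ) := by exact_mod_cast (by omega : (0:ℤ) ≤ b - y - 2)
    have h := rpow_concave_step hn0 hn1 hx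
    have e1 : ((b - y : ℤ) : ℝ) = ((b - y - 2 : ℤ) : ℝ) + 2 := by push_cast; ring
    have e2 : ((b - y - 1 : ℤ) : ℝ) = ((b - y - 2 : ℤ) : ℝ) + 1 := by push_cast; ring
    have e3 : ((b - (y + 1) : ℤ) : ℝ) = ((b - y - 2 : ℤ) : ℝ) + 1 := by push_cast; ring
    have e4 : ((b - (y + 1) - 1 : ℤ) : ℝ) = ((b - y - 2 : ℤ) : ℝ) := by push_cast; ring
    rw [e1, e2, e3, e4]
    linarith
end
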